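/- arXiv:2602.02155 — 2 statements merged into one kernel-verified Lean document; each statement's English description precedes it below -/
import Mathlib

section
/- Let c_{r,t} denote the infimum, over all K_t-free graphs G on a finite nonempty vertex set, of the probability that r vertices chosen independently and uniformly at random from V(G) (with repetition allowed) form an independent set (where a multiset of vertices is independent if no two distinct chosen vertices are adjacent). Then for all ℓ, t ≥ 3, the ℓ-color Ramsey number satisfies r(t; ℓ) ≥ c_{t,t}^{-(ℓ-2)/t} · 2^{(t-1)/2}. -/
/-- The `ℓ`-color Ramsey number `r(t; ℓ)`: least `n` such that every `ℓ`-coloring of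
the edges of `K_n` contains a monochromatic `K_t`. -/
noncomputable def ramsey (t ℓ : ℕ) : ℕ :=
  sInf {n | ∀ c : Sym2 (Fin n) → Fin ℓ, ∃ i : Fin ℓ, ∃ S : Finset (Fin n),
    S.card = t ∧ ∀ x ∈ S, ∀ y ∈ S, x ≠ y → c s(x, y) = i}

/-- `c_{r,t}`: the infimum over `K_t`-free graphs `G` (on a finite nonempty vertex set,
wlog `Fin n`) of the probability that `r` i.i.d. uniform vertices form an independent set. -/
noncomputable def cval (r t : ℕ) : ℝ :=
  sInf {x : ℝ | ∃ n : ℕ, 0 < n ∧ ∃ G : SimpleGraph (Fin n), G.CliqueFree t ∧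
    x = (Nat.card {f : Fin r → Fin n // ∀ i j, ¬ G.Adj (f i) (f j)} : ℝ) / (n : ℝ) ^ r}

/-!
Fix a `K_t`-free graph `G` on `m` vertices and let `n = r(t; ℓ)`. Color the edges of `K_n` at
random: give every vertex `x` a uniform `φ x ∈ V(G)^(ℓ-2)` and every edge a uniform color
`χ ∈ {0, 1}`, and color `xy` by the first coordinate `i` with `φ x i ~ φ y i`, or by `χ(xy)` if
there is none. A `K_t` monochromatic in a coordinate color would be a `K_t` in `G`, so some
`t`-set is independent in every coordinate and `χ`-monochromatic. The union bound over the
`t`-sets and the two colors gives `1 ≤ 2 (n choose t) p^(ℓ-2) 2^(-(t choose 2))`, where `p` is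
the probability that `t` uniform vertices of `G` are independent; since `2 (n choose t) ≤ n^t`,
`p^(ℓ-2) ≥ (2^((t-1)/2) / n)^t`, and taking the infimum over `G` gives the bound.
The random choices are realised as counts over all pairs `(φ, χ)`.
-/

open Finset

def RamseyProperty (t ℓ n : ℕ) : Prop :=
  ∀ c : Sym2 (Fin n) → Fin ℓ, ∃ i, ∃ S : Finset (Fin n), #S = t ∧
    (S : Set (Fin n)).Pairwise fun x y => c s(x, y) = i

section Ramsey

variable {α κ : Type*} [LinearOrder α] [Fintype κ] [Nonempty κ]

-- Greedily: keep the least vertex, recurse into its largest color class among the others.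
theorem exists_ordered_coloring (c : Sym2 α → κ) (k : ℕ) (A : Finset α)
    (hA : (Fintype.card κ + 1) ^ k ≤ #A) :
    ∃ L ⊆ A, #L = k ∧ ∃ d : α → κ, ∀ x ∈ L, ∀ y ∈ L, x < y → c s(x, y) = d x := by
  classical
  induction k generalizing A with
  | zero => exact ⟨∅, empty_subset A, rfl, Classical.arbitrary _, by simp⟩
  | succ k ih =>
    have hne : A.Nonempty := card_pos.1 (lt_of_lt_of_le (by positivity) hA)
    set v := A.min' hne
    have hv : v ∈ A := min'_mem A hne
    obtain ⟨i, -, hi⟩ : ∃ i ∈ (univ : Finset κ),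
        (Fintype.card κ + 1) ^ k ≤ #{u ∈ A.erase v | c s(v, u) = i} := by
      refine exists_le_card_fiber_of_mul_le_card_of_maps_to (fun _ _ => mem_univ _)
        univ_nonempty ?_
      have hk := Nat.one_le_pow k (Fintype.card κ + 1) (Nat.succ_pos _)
      have hsplit : Fintype.card κ * (Fintype.card κ + 1) ^ k + (Fintype.card κ + 1) ^ k ≤ #A :=
        le_of_eq_of_le (by ring) hA
      rw [card_univ, card_erase_of_mem hv]
      exact Nat.le_sub_one_of_lt (by linarith)
    obtain ⟨L, hLA, hL, d, hd⟩ := ih _ hi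
    have hvL : v ∉ L := fun h => by simpa using (mem_filter.1 (hLA h)).1
    have hLv : ∀ y ∈ L, v < y ∧ c s(v, y) = i := fun y hy => by
      obtain ⟨hy, hc⟩ := mem_filter.1 (hLA hy)
      exact ⟨lt_of_le_of_ne (min'_le A y (mem_of_mem_erase hy)) (ne_of_mem_erase hy).symm, hc⟩
    refine ⟨insert v L, insert_subset hv fun y hy => mem_of_mem_erase (mem_filter.1 (hLA hy)).1,
      by rw [card_insert_of_notMem hvL, hL], Function.update d v i, ?_⟩
    intro x hx y hy hxy
    rcases mem_insert.1 hx with rfl | hx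
    · rcases mem_insert.1 hy with rfl | hy
      · exact absurd hxy (lt_irrefl _)
      · simpa using (hLv y hy).2
    · rcases mem_insert.1 hy with rfl | hy
      · exact absurd hxy (not_lt.2 (hLv x hx).1.le)
      · rw [Function.update_of_ne (hLv x hx).1.ne']
        exact hd x hx y hy hxy

theorem exists_monochromatic_of_card_le [Fintype α] (c : Sym2 α → κ) (t : ℕ)
    (hα : (Fintype.card κ + 1) ^ (Fintype.card κ * t) ≤ Fintype.card α) :
    ∃ i, ∃ S : Finset α, #S = t ∧ (S : Set α).Pairwise fun x y => c s(x, y) = i := by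
  classical
  obtain ⟨L, -, hL, d, hd⟩ := exists_ordered_coloring c _ univ hα
  obtain ⟨i, -, hi⟩ := exists_le_card_fiber_of_mul_le_card_of_maps_to
    (fun x _ => mem_univ (d x)) univ_nonempty (by rw [card_univ, hL] : #univ * t ≤ #L)
  obtain ⟨S, hSL, hS⟩ := exists_subset_card_eq hi
  refine ⟨i, S, hS, fun x hx y hy hxy => show c s(x, y) = i from ?_⟩
  have hx := mem_filter.1 (hSL hx)
  have hy := mem_filter.1 (hSL hy)
  rcases hxy.lt_or_gt with h | h
  · rw [hd x hx.1 y hy.1 h, hx.2]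
  · rw [Sym2.eq_swap, hd y hy.1 x hx.1 h, hy.2]

end Ramsey

-- Any finite bound does: without one, `ramsey t ℓ` would be the junk value `sInf ∅ = 0`.
theorem ramseyProperty_pow {t ℓ : ℕ} (hℓ : 0 < ℓ) :
    RamseyProperty t ℓ ((ℓ + 1) ^ (ℓ * t)) := by
  have : NeZero ℓ := ⟨hℓ.ne'⟩
  intro c
  simpa using exists_monochromatic_of_card_le c t (by simp)

theorem ramseyProperty_ramsey {t ℓ : ℕ} (hℓ : 0 < ℓ) : RamseyProperty t ℓ (ramsey t ℓ) :=
  Nat.sInf_mem (s := {n | RamseyProperty t ℓ n}) ⟨_, ramseyProperty_pow hℓ⟩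

theorem RamseyProperty.le {t ℓ n : ℕ} (h : RamseyProperty t ℓ n) (hℓ : 0 < ℓ) : t ≤ n := by
  obtain ⟨-, S, hS, -⟩ := h fun _ => ⟨0, hℓ⟩
  simpa [hS] using S.card_le_univ

theorem RamseyProperty.exists_monochromatic {t n : ℕ} {κ : Type*} [Fintype κ]
    (h : RamseyProperty t (Fintype.card κ) n) (c : Sym2 (Fin n) → κ) :
    ∃ i, ∃ S : Finset (Fin n), #S = t ∧ (S : Set (Fin n)).Pairwise fun x y => c s(x, y) = i := by
  obtain ⟨i, S, hS, hmono⟩ := h (Fintype.equivFin κ ∘ c)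
  exact ⟨(Fintype.equivFin κ).symm i, S, hS, fun x hx y hy hxy =>
    (Equiv.eq_symm_apply _).2 (hmono hx hy hxy)⟩

section Counting

variable {α β : Type*} [Fintype α] [DecidableEq α] [Fintype β]

theorem card_filter_restrict_mul (T : Finset α) (Q : (T → β) → Prop) [DecidablePred Q] :
    #{f : α → β | Q (T.restrict f)} * Fintype.card β ^ #T =
      #{g : T → β | Q g} * Fintype.card β ^ Fintype.card α := by
  let e : (α → β) ≃ (T → β) × ({a // a ∉ T} → β) :=
    (Equiv.arrowCongr (Equiv.sumCompl (· ∈ T)).symm (Equiv.refl β)).trans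
      (Equiv.sumArrowEquivProdArrow _ _ _)
  have hcard : #{f : α → β | Q (T.restrict f)} =
      #{g : T → β | Q g} * Fintype.card β ^ Fintype.card {a // a ∉ T} := by
    rw [← Fintype.card_subtype, ← Fintype.card_subtype, ← Fintype.card_fun, ← Fintype.card_prod]
    exact Fintype.card_congr
      ((e.subtypeEquiv fun _ => Iff.rfl).trans Equiv.prodSubtypeFstEquivSubtypeProd)
  have hα : Fintype.card α = #T + Fintype.card {a // a ∉ T} := by
    rw [← Fintype.card_coe T, ← Fintype.card_sum]
    exact Fintype.card_congr (Equiv.sumCompl (· ∈ T)).symm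
  rw [hcard, hα, pow_add]
  ring

theorem card_filter_forall_coord {ι V W : Type*} [Fintype ι] [DecidableEq ι] [Fintype V]
    [DecidableEq V] [Fintype W] (P : (V → W) → Prop) [DecidablePred P] :
    #{g : V → ι → W | ∀ i, P fun x => g x i} = #{u | P u} ^ Fintype.card ι := by
  rw [← Fintype.card_subtype, ← Fintype.card_subtype, ← Fintype.card_fun]
  exact Fintype.card_congr
    (((Equiv.piComm _).subtypeEquiv fun _ => Iff.rfl).trans Equiv.subtypePiEquivPi)

end Counting

theorem Nat.choose_mul_two_le_pow (n : ℕ) {t : ℕ} (ht : 2 ≤ t) : n.choose t * 2 ≤ n ^ t :=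
  calc n.choose t * 2 ≤ n.choose t * t.factorial := Nat.mul_le_mul_left _ (Nat.factorial_le ht)
    _ = n.descFactorial t := by rw [Nat.descFactorial_eq_factorial_mul_choose, mul_comm]
    _ ≤ n ^ t := n.descFactorial_le_pow t

theorem Real.rpow_div_le_of_pow_le_pow {b x : ℝ} {k t : ℕ} (hb : 0 ≤ b) (hx : 0 ≤ x) (hk : k ≠ 0)
    (h : b ^ t ≤ x ^ k) : b ^ ((t : ℝ) / k) ≤ x :=
  calc b ^ ((t : ℝ) / k) = (b ^ t) ^ (k⁻¹ : ℝ) := by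
        rw [div_eq_mul_inv, Real.rpow_mul hb, Real.rpow_natCast]
    _ ≤ (x ^ k) ^ (k⁻¹ : ℝ) := Real.rpow_le_rpow (by positivity) h (by positivity)
    _ = x := Real.pow_rpow_inv_natCast hx hk

theorem Real.rpow_neg_mul_le_of_div_rpow_inv_le {a c N s : ℝ} (ha : 0 < a) (hN : 0 < N) (hs : 0 < s)
    (hc : (a / N) ^ s⁻¹ ≤ c) : c ^ (-s) * a ≤ N :=
  calc c ^ (-s) * a ≤ ((a / N) ^ s⁻¹) ^ (-s) * a :=
        mul_le_mul_of_nonneg_right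
          (Real.rpow_le_rpow_of_nonpos (by positivity) hc (neg_nonpos.2 hs.le)) ha.le
    _ = N := by
        rw [← Real.rpow_mul (by positivity), inv_mul_eq_div, neg_div, div_self hs.ne',
          Real.rpow_neg_one, inv_div, div_mul_cancel₀ _ ha.ne']

namespace SimpleGraph

variable {V V' W : Type*} (G : SimpleGraph W)

variable (V) in
noncomputable def indepMapCount : ℕ :=
  Nat.card {f : V → W // ∀ x y, ¬ G.Adj (f x) (f y)}

theorem indepMapCount_congr (e : V ≃ V') : G.indepMapCount V = G.indepMapCount V' :=
  Nat.card_congr <| (e.arrowCongr (Equiv.refl W)).subtypeEquiv fun _ =>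
    ⟨fun h _ _ => h _ _, fun h x y => by simpa using h (e x) (e y)⟩

theorem card_filter_indep [Fintype V] [DecidableEq V] [Fintype W] [DecidableRel G.Adj] :
    #{f : V → W | ∀ x y, ¬ G.Adj (f x) (f y)} = G.indepMapCount V := by
  rw [indepMapCount, Nat.card_eq_fintype_card, Fintype.card_subtype]

theorem CliqueFree.not_pairwise_adj_comp {α : Type*} {G : SimpleGraph W} {S : Finset α}
    (hG : G.CliqueFree #S) (f : α → W) : ¬ (S : Set α).Pairwise fun x y => G.Adj (f x) (f y) := by
  classical
  intro h
  refine hG (S.image f) ⟨?_, card_image_of_injOn fun x hx y hy hxy => ?_⟩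
  · rw [coe_image]
    rintro _ ⟨x, hx, rfl⟩ _ ⟨y, hy, rfl⟩ hne
    exact h hx hy (ne_of_apply_ne f hne)
  · by_contra hne
    have hadj : G.Adj (f x) (f y) := h hx hy hne
    exact G.irrefl (hxy ▸ hadj)

end SimpleGraph

section SawinColoring

variable {α ι W κ : Type*} [Fintype ι] (G : SimpleGraph W) [DecidableRel G.Adj] (φ : α → ι → W)

def adjCoords : Sym2 α → Finset ι :=
  Sym2.lift ⟨fun x y => {i | G.Adj (φ x i) (φ y i)}, fun x y => by simp only [G.adj_comm]⟩

variable {G φ} in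
theorem mem_adjCoords {x y : α} {i : ι} : i ∈ adjCoords G φ s(x, y) ↔ G.Adj (φ x i) (φ y i) := by
  simp [adjCoords]

variable [LinearOrder ι] (χ : Sym2 α → κ)

def sawinColoring (e : Sym2 α) : κ ⊕ ι :=
  if h : (adjCoords G φ e).Nonempty then .inr ((adjCoords G φ e).min' h) else .inl (χ e)

variable {G φ χ}

theorem sawinColoring_eq_inl {e : Sym2 α} {j : κ} :
    sawinColoring G φ χ e = .inl j ↔ adjCoords G φ e = ∅ ∧ χ e = j := by
  unfold sawinColoring
  split_ifs with h <;> simp_all [Finset.nonempty_iff_ne_empty]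

theorem mem_adjCoords_of_sawinColoring_eq_inr {e : Sym2 α} {i : ι}
    (h : sawinColoring G φ χ e = .inr i) : i ∈ adjCoords G φ e := by
  unfold sawinColoring at h
  split_ifs at h with hne
  exact Sum.inr_injective h ▸ min'_mem _ hne

theorem sawinColoring_monochromatic {S : Finset α} (hG : G.CliqueFree #S) {c : κ ⊕ ι}
    (h : (S : Set α).Pairwise fun x y => sawinColoring G φ χ s(x, y) = c) :
    ∃ j, (S : Set α).Pairwise (fun x y => χ s(x, y) = j) ∧
      ∀ i, ∀ x ∈ S, ∀ y ∈ S, ¬ G.Adj (φ x i) (φ y i) := by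
  rcases c with j | i
  · refine ⟨j, fun x hx y hy hxy => (sawinColoring_eq_inl.1 (h hx hy hxy)).2,
      fun i x hx y hy hadj => ?_⟩
    have hxy : x ≠ y := fun hxy => G.irrefl (hxy ▸ hadj)
    have hempty := (sawinColoring_eq_inl.1 (h hx hy hxy)).1
    exact (Finset.eq_empty_iff_forall_notMem.1 hempty) i (mem_adjCoords.2 hadj)
  · exact absurd (fun x hx y hy hxy =>
      mem_adjCoords.1 (mem_adjCoords_of_sawinColoring_eq_inr (h hx hy hxy)))
      (hG.not_pairwise_adj_comp fun x => φ x i)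

theorem RamseyProperty.exists_indep_coords_monochromatic {n t : ℕ} [Fintype κ]
    (hR : RamseyProperty t (Fintype.card (κ ⊕ ι)) n) (hG : G.CliqueFree t)
    (φ : Fin n → ι → W) (χ : Sym2 (Fin n) → κ) :
    ∃ T : Finset (Fin n), #T = t ∧ ∃ j, (T : Set (Fin n)).Pairwise (fun x y => χ s(x, y) = j) ∧
      ∀ i, ∀ x ∈ T, ∀ y ∈ T, ¬ G.Adj (φ x i) (φ y i) := by
  obtain ⟨c, T, hT, hmono⟩ := hR.exists_monochromatic (sawinColoring G φ χ)
  exact ⟨T, hT, sawinColoring_monochromatic (hT ▸ hG) hmono⟩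

end SawinColoring

section UnionBound

variable {n m k t : ℕ} {G : SimpleGraph (Fin m)} [DecidableRel G.Adj]

theorem card_filter_restrict_indep (T : Finset (Fin n)) (hT : #T = t) :
    #{φ : Fin n → Fin k → Fin m |
        ∀ i, ∀ x y : T, ¬ G.Adj (T.restrict φ x i) (T.restrict φ y i)} * (m ^ k) ^ t =
      G.indepMapCount (Fin t) ^ k * (m ^ k) ^ n := by
  have hcoord := card_filter_forall_coord (ι := Fin k)
    fun u : T → Fin m => ∀ x y, ¬ G.Adj (u x) (u y)
  have hT' : Fintype.card T = t := by rw [Fintype.card_coe, hT]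
  beta_reduce at hcoord
  rw [G.card_filter_indep, G.indepMapCount_congr (Fintype.equivFinOfCardEq hT'),
    Fintype.card_fin] at hcoord
  have h := card_filter_restrict_mul (β := Fin k → Fin m) T
    fun g => ∀ i, ∀ x y, ¬ G.Adj (g x i) (g y i)
  simp only [Fintype.card_fun, Fintype.card_fin, hT] at h
  rw [h]
  -- the two filters differ only in their decidability instances
  convert congrArg (· * (m ^ k) ^ n) hcoord using 3
  ext; simp

theorem card_filter_restrict_const (P : Finset (Sym2 (Fin n))) (j : Fin 2) :
    #{χ : Sym2 (Fin n) → Fin 2 | P.restrict χ = fun _ => j} * 2 ^ #P =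
      2 ^ Fintype.card (Sym2 (Fin n)) := by
  simpa [filter_eq'] using card_filter_restrict_mul P fun g => g = fun _ => j

theorem RamseyProperty.pow_mul_two_pow_le (hR : RamseyProperty t (2 + k) n) (hG : G.CliqueFree t)
    (hm : 0 < m) :
    (m ^ k) ^ t * 2 ^ t.choose 2 ≤ n.choose t * 2 * G.indepMapCount (Fin t) ^ k := by
  set I := G.indepMapCount (Fin t)
  set N := Fintype.card (Sym2 (Fin n))
  let edges (T : Finset (Fin n)) : Finset (Sym2 (Fin n)) := T.offDiag.image Sym2.mk.uncurry
  let A (T : Finset (Fin n)) : Finset (Fin n → Fin k → Fin m) :=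
    {φ | ∀ i, ∀ x y : T, ¬ G.Adj (T.restrict φ x i) (T.restrict φ y i)}
  let B (T : Finset (Fin n)) (j : Fin 2) : Finset (Sym2 (Fin n) → Fin 2) :=
    {χ | (edges T).restrict χ = fun _ => j}
  let bad := powersetCard t (univ : Finset (Fin n)) ×ˢ (univ : Finset (Fin 2))
  have hcover : (univ ×ˢ univ : Finset ((Fin n → Fin k → Fin m) × (Sym2 (Fin n) → Fin 2))) ⊆
      bad.biUnion fun p => A p.1 ×ˢ B p.1 p.2 := by
    rintro ⟨φ, χ⟩ -
    have hR' : RamseyProperty t (Fintype.card (Fin 2 ⊕ Fin k)) n := by simpa using hR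
    obtain ⟨T, hT, j, hχ, hφ⟩ := hR'.exists_indep_coords_monochromatic hG φ χ
    refine mem_biUnion.2 ⟨(T, j), mem_product.2 ⟨mem_powersetCard_univ.2 hT, mem_univ _⟩,
      mem_product.2 ⟨mem_filter.2 ⟨mem_univ _, fun i x y => hφ i x x.2 y y.2⟩,
        mem_filter.2 ⟨mem_univ _, funext fun ⟨e, he⟩ => ?_⟩⟩⟩
    obtain ⟨⟨x, y⟩, hxy, rfl⟩ := mem_image.1 he
    obtain ⟨hx, hy, hne⟩ := mem_offDiag.1 hxy
    exact hχ hx hy hne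
  have hbad : ∀ p ∈ bad, #(A p.1 ×ˢ B p.1 p.2) * ((m ^ k) ^ t * 2 ^ t.choose 2) =
      I ^ k * (m ^ k) ^ n * 2 ^ N := by
    intro p hp
    have hT : #p.1 = t := mem_powersetCard_univ.1 (mem_product.1 hp).1
    have hedges : #(edges p.1) = t.choose 2 := by rw [Sym2.card_image_offDiag, hT]
    rw [card_product, ← card_filter_restrict_indep p.1 hT, ← hedges,
      ← card_filter_restrict_const (edges p.1) p.2]
    ring
  have hunion := (card_le_card hcover).trans card_biUnion_le
  rw [card_product, card_univ, card_univ] at hunion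
  simp only [Fintype.card_fun, Fintype.card_fin] at hunion
  refine Nat.le_of_mul_le_mul_left ?_ (by positivity : 0 < (m ^ k) ^ n * 2 ^ N)
  calc (m ^ k) ^ n * 2 ^ N * ((m ^ k) ^ t * 2 ^ t.choose 2)
      ≤ (∑ p ∈ bad, #(A p.1 ×ˢ B p.1 p.2)) * ((m ^ k) ^ t * 2 ^ t.choose 2) :=
        Nat.mul_le_mul_right _ hunion
    _ = ∑ _p ∈ bad, I ^ k * (m ^ k) ^ n * 2 ^ N := by rw [sum_mul]; exact sum_congr rfl hbad
    _ = (m ^ k) ^ n * 2 ^ N * (n.choose t * 2 * I ^ k) := by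
        rw [sum_const, card_product, card_powersetCard, card_univ, card_univ, Fintype.card_fin,
          Fintype.card_fin, smul_eq_mul]
        ring

theorem RamseyProperty.pow_le_indepMapCount_div_pow
    (hR : RamseyProperty t (2 + k) n) (hG : G.CliqueFree t) (hm : 0 < m) (ht : 2 ≤ t) :
    ((2 : ℝ) ^ (((t : ℝ) - 1) / 2) / n) ^ t ≤ ((G.indepMapCount (Fin t) : ℝ) / m ^ t) ^ k := by
  have hcount : (m ^ k) ^ t * 2 ^ t.choose 2 ≤ n ^ t * G.indepMapCount (Fin t) ^ k :=
    (hR.pow_mul_two_pow_le hG hm).trans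
      (Nat.mul_le_mul_right _ (Nat.choose_mul_two_le_pow n ht))
  have htwo : ((2 : ℝ) ^ (((t : ℝ) - 1) / 2)) ^ t = 2 ^ t.choose 2 := by
    rw [← Real.rpow_natCast, ← Real.rpow_mul zero_le_two, ← Real.rpow_natCast 2,
      Nat.cast_choose_two]
    ring_nf
  have hn : 0 < n := by have := hR.le (by omega); omega
  rw [div_pow, div_pow, htwo, ← pow_mul, div_le_div_iff₀ (by positivity) (by positivity)]
  have hcount' : 2 ^ t.choose 2 * m ^ (t * k) ≤ G.indepMapCount (Fin t) ^ k * n ^ t := by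
    rw [mul_comm t k, pow_mul]
    linarith
  exact_mod_cast hcount'

end UnionBound

/-- Sawin's lemma: `r(t; ℓ) ≥ c_{t,t}^{-(ℓ-2)/t} · 2^{(t-1)/2}`. -/
theorem sawin_lemma (ℓ t : ℕ) (hℓ : 3 ≤ ℓ) (ht : 3 ≤ t) :
    (ramsey t ℓ : ℝ) ≥ cval t t ^ (-(((ℓ : ℝ) - 2) / t)) * (2 : ℝ) ^ (((t : ℝ) - 1) / 2) := by
  obtain ⟨k, rfl⟩ : ∃ k, ℓ = 2 + k := ⟨ℓ - 2, by omega⟩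
  have hR : RamseyProperty t (2 + k) (ramsey t (2 + k)) := ramseyProperty_ramsey (by omega)
  have hn : (0 : ℝ) < ramsey t (2 + k) := by
    have := hR.le (by omega)
    exact_mod_cast (by omega : 0 < ramsey t (2 + k))
  have hexp : ((↑(2 + k) : ℝ) - 2) / t = k / t := by push_cast; ring
  rw [hexp, ge_iff_le]
  have hkt : (0 : ℝ) < k / t := div_pos (by exact_mod_cast (by omega : 0 < k))
    (by exact_mod_cast (by omega : 0 < t))
  refine Real.rpow_neg_mul_le_of_div_rpow_inv_le (by positivity) hn hkt ?_
  rw [inv_div]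
  refine le_csInf ⟨_, 1, one_pos, ⊥, SimpleGraph.cliqueFree_bot (by omega), rfl⟩ ?_
  rintro _ ⟨m, hm, G, hG, rfl⟩
  classical
  exact Real.rpow_div_le_of_pow_le_pow (by positivity) (by positivity) (by omega)
    (hR.pow_le_indepMapCount_div_pow hG hm (by omega))
end

section
/- Abbott's product bound: for all t ≥ 2 and all ℓ₁, ℓ₂ ≥ 1, r(t; ℓ₁ + ℓ₂) ≥ (r(t; ℓ₁) − 1)·(r(t; ℓ₂) − 1) + 1. In particular, for all ℓ ≥ 2 and t ≥ 2, r(t; ℓ) ≥ (r(t; 2) − 1)^{⌊ℓ/2⌋} + 1. -/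
namespace AbbottAux

/-- The arrow property: every `ℓ`-coloring of `K_n` has a monochromatic `K_t`. -/
def RProp (t ℓ n : ℕ) : Prop :=
  ∀ c : Sym2 (Fin n) → Fin ℓ, ∃ i : Fin ℓ, ∃ S : Finset (Fin n),
    S.card = t ∧ ∀ x ∈ S, ∀ y ∈ S, x ≠ y → c s(x, y) = i

lemma ramsey_def (t ℓ : ℕ) : ramsey t ℓ = sInf {n | RProp t ℓ n} := rfl

/-- Transport a monochromatic set along an injection. -/
lemma image_side {n : ℕ} {β γ : Type*} [DecidableEq β] {b : γ} {k : ℕ}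
    (f : Fin n → β) (hf : Function.Injective f) (c : Sym2 β → γ)
    (S : Finset (Fin n)) (hcard : S.card = k)
    (hmono : ∀ x ∈ S, ∀ y ∈ S, x ≠ y → c (Sym2.map f s(x, y)) = b) :
    ∃ T : Finset β, (∀ x ∈ T, ∃ j ∈ S, x = f j) ∧ T.card = k ∧
      ∀ x ∈ T, ∀ y ∈ T, x ≠ y → c s(x, y) = b := by
  refine ⟨S.image f, ?_, ?_, ?_⟩
  · intro x hx
    obtain ⟨a, ha, rfl⟩ := Finset.mem_image.mp hx
    exact ⟨a, ha, rfl⟩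
  · rw [Finset.card_image_of_injective _ hf, hcard]
  · rintro x hx y hy hxy
    obtain ⟨a, ha, rfl⟩ := Finset.mem_image.mp hx
    obtain ⟨b', hb', rfl⟩ := Finset.mem_image.mp hy
    have hab : a ≠ b' := fun h => hxy (by rw [h])
    have := hmono a ha b' hb' hab
    rwa [Sym2.map_pair_eq] at this

lemma RProp.pull {t ℓ n : ℕ} (h : RProp t ℓ n) {β : Type*} [DecidableEq β]
    (f : Fin n → β) (hf : Function.Injective f) (c : Sym2 β → Fin ℓ) :
    ∃ i : Fin ℓ, ∃ T : Finset β, T.card = t ∧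
      ∀ x ∈ T, ∀ y ∈ T, x ≠ y → c s(x, y) = i := by
  obtain ⟨i, S, hcard, hmono⟩ := h (fun e => c (e.map f))
  obtain ⟨T, -, hTcard, hTmono⟩ := image_side f hf c S hcard hmono
  exact ⟨i, T, hTcard, hTmono⟩

lemma RProp.mono_n {t ℓ m n : ℕ} (h : RProp t ℓ m) (hmn : m ≤ n) : RProp t ℓ n := by
  intro c
  exact h.pull (Fin.castLE hmn) (Fin.castLE_injective hmn) c

/-- Two-color arrow property. -/
def P2 (s t n : ℕ) : Prop :=
  ∀ c : Sym2 (Fin n) → Bool,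
    (∃ S : Finset (Fin n), S.card = s ∧ ∀ x ∈ S, ∀ y ∈ S, x ≠ y → c s(x, y) = false) ∨
    (∃ S : Finset (Fin n), S.card = t ∧ ∀ x ∈ S, ∀ y ∈ S, x ≠ y → c s(x, y) = true)

lemma P2.pull {s t n : ℕ} (h : P2 s t n) {β : Type*} [DecidableEq β]
    (f : Fin n → β) (hf : Function.Injective f) (c : Sym2 β → Bool) :
    (∃ T : Finset β, (∀ x ∈ T, ∃ j, x = f j) ∧ T.card = s ∧
        ∀ x ∈ T, ∀ y ∈ T, x ≠ y → c s(x, y) = false) ∨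
    (∃ T : Finset β, (∀ x ∈ T, ∃ j, x = f j) ∧ T.card = t ∧
        ∀ x ∈ T, ∀ y ∈ T, x ≠ y → c s(x, y) = true) := by
  rcases h (fun e => c (e.map f)) with ⟨S, hcard, hmono⟩ | ⟨S, hcard, hmono⟩
  · obtain ⟨T, hTr, hTcard, hTmono⟩ := image_side f hf c S hcard hmono
    exact Or.inl ⟨T, fun x hx => (hTr x hx).imp (fun j hj => hj.2), hTcard, hTmono⟩
  · obtain ⟨T, hTr, hTcard, hTmono⟩ := image_side f hf c S hcard hmono
    exact Or.inr ⟨T, fun x hx => (hTr x hx).imp (fun j hj => hj.2), hTcard, hTmono⟩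

lemma mono_insert {n : ℕ} {γ : Type*} (c : Sym2 (Fin n) → γ) (v : Fin n) (b : γ)
    (S : Finset (Fin n)) (hv : v ∉ S)
    (hS : ∀ x ∈ S, c s(v, x) = b)
    (hmono : ∀ x ∈ S, ∀ y ∈ S, x ≠ y → c s(x, y) = b) :
    ∀ x ∈ insert v S, ∀ y ∈ insert v S, x ≠ y → c s(x, y) = b := by
  intro x hx y hy hxy
  rcases Finset.mem_insert.1 hx with hxv | hxS
  · rcases Finset.mem_insert.1 hy with hyv | hyS
    · exact absurd (hxv.trans hyv.symm) hxy
    · rw [hxv]; exact hS y hyS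
  · rcases Finset.mem_insert.1 hy with hyv | hyS
    · rw [hyv, Sym2.eq_swap]; exact hS x hxS
    · exact hmono x hxS y hyS hxy

/-- Finite two-color Ramsey theorem. -/
lemma ramsey2 : ∀ s t : ℕ, ∃ n, P2 s t n := by
  intro s
  induction s with
  | zero => exact fun t => ⟨0, fun c => Or.inl ⟨∅, rfl, by simp⟩⟩
  | succ s ihs =>
    intro t
    induction t with
    | zero => exact ⟨0, fun c => Or.inr ⟨∅, rfl, by simp⟩⟩
    | succ t iht =>
      obtain ⟨n₁, h₁⟩ := ihs (t + 1)
      obtain ⟨n₂, h₂⟩ := iht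
      refine ⟨n₁ + n₂ + 1, fun c => ?_⟩
      set v : Fin (n₁ + n₂ + 1) := Fin.last _ with hv
      classical
      set base := Finset.univ.erase v with hbase
      set A := base.filter (fun x => c s(v, x) = false) with hA
      set B := base.filter (fun x => ¬ c s(v, x) = false) with hB
      have hcards : A.card + B.card = n₁ + n₂ := by
        rw [hA, hB, Finset.card_filter_add_card_filter_not]
        rw [hbase, Finset.card_erase_of_mem (Finset.mem_univ v), Finset.card_univ]
        simp
      have hcase : n₁ ≤ A.card ∨ n₂ ≤ B.card := by omega
      rcases hcase with hAc | hBc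
      · have hfinj : Function.Injective (A.orderEmbOfCardLe hAc) :=
          (A.orderEmbOfCardLe hAc).injective
        rcases h₁.pull (A.orderEmbOfCardLe hAc) hfinj c with
          ⟨S, hSr, hScard, hSmono⟩ | ⟨S, hSr, hScard, hSmono⟩
        · have hSA : ∀ x ∈ S, x ∈ A := by
            intro x hx
            obtain ⟨j, rfl⟩ := hSr x hx
            exact A.orderEmbOfCardLe_mem hAc j
          have hvS : v ∉ S := by
            intro hvmem
            have := hSA v hvmem
            rw [hA, Finset.mem_filter, hbase] at this
            exact (Finset.notMem_erase v _) this.1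
          have hedge : ∀ x ∈ S, c s(v, x) = false := by
            intro x hx
            have := hSA x hx
            rw [hA, Finset.mem_filter] at this
            exact this.2
          refine Or.inl ⟨insert v S, ?_, mono_insert c v false S hvS hedge hSmono⟩
          rw [Finset.card_insert_of_notMem hvS, hScard]
        · exact Or.inr ⟨S, hScard, hSmono⟩
      · have hfinj : Function.Injective (B.orderEmbOfCardLe hBc) :=
          (B.orderEmbOfCardLe hBc).injective
        rcases h₂.pull (B.orderEmbOfCardLe hBc) hfinj c with
          ⟨S, hSr, hScard, hSmono⟩ | ⟨S, hSr, hScard, hSmono⟩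
        · exact Or.inl ⟨S, hScard, hSmono⟩
        · have hSB : ∀ x ∈ S, x ∈ B := by
            intro x hx
            obtain ⟨j, rfl⟩ := hSr x hx
            exact B.orderEmbOfCardLe_mem hBc j
          have hvS : v ∉ S := by
            intro hvmem
            have := hSB v hvmem
            rw [hB, Finset.mem_filter, hbase] at this
            exact (Finset.notMem_erase v _) this.1
          have hedge : ∀ x ∈ S, c s(v, x) = true := by
            intro x hx
            have := hSB x hx
            rw [hB, Finset.mem_filter] at this
            simpa using this.2
          refine Or.inr ⟨insert v S, ?_, mono_insert c v true S hvS hedge hSmono⟩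
          rw [Finset.card_insert_of_notMem hvS, hScard]

/-- Finite multicolor Ramsey theorem. -/
lemma rprop_exists (t : ℕ) : ∀ ℓ : ℕ, 1 ≤ ℓ → ∃ n, RProp t ℓ n := by
  intro ℓ
  induction ℓ with
  | zero => intro h; omega
  | succ ℓ ih =>
    intro _
    rcases Nat.eq_zero_or_pos ℓ with rfl | hℓ
    · refine ⟨t, fun c => ⟨0, Finset.univ, by simp, fun x _ y _ _ => by
        have h1 := (c s(x, y)).isLt
        exact Fin.ext (by omega)⟩⟩
    · obtain ⟨m, hm⟩ := ih hℓ
      obtain ⟨n, hn⟩ := ramsey2 m t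
      refine ⟨n, fun c => ?_⟩
      classical
      rcases hn (fun e => decide (c e = Fin.last ℓ)) with
        ⟨S, hScard, hSmono⟩ | ⟨S, hScard, hSmono⟩
      · -- S has card m and all edges avoid the last color; recurse
        set f := S.orderEmbOfFin hScard with hf
        set c' : Sym2 (Fin m) → Fin ℓ := fun e =>
          if h : (c (e.map f)).val < ℓ then ⟨(c (e.map f)).val, h⟩ else ⟨0, hℓ⟩ with hc'
        obtain ⟨i', T, hTcard, hTmono⟩ := hm c'
        refine ⟨Fin.castSucc i', T.image f, ?_, ?_⟩
        · rw [Finset.card_image_of_injective _ f.injective, hTcard]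
        · rintro x hx y hy hxy
          obtain ⟨a, ha, rfl⟩ := Finset.mem_image.mp hx
          obtain ⟨b, hb, rfl⟩ := Finset.mem_image.mp hy
          have hab : a ≠ b := fun h => hxy (by rw [h])
          have hne : c s(f a, f b) ≠ Fin.last ℓ := by
            have := hSmono (f a) (S.orderEmbOfFin_mem hScard a)
              (f b) (S.orderEmbOfFin_mem hScard b) hxy
            simpa using this
          have hlt : (c s(f a, f b)).val < ℓ := by
            have h1 : (c s(f a, f b)).val < ℓ + 1 := (c _).isLt
            have h2 : (c s(f a, f b)).val ≠ ℓ := by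
              intro h
              exact hne (Fin.ext (by simpa using h))
            omega
          have hT := hTmono a ha b hb hab
          rw [hc'] at hT
          simp only [Sym2.map_pair_eq] at hT
          rw [dif_pos hlt] at hT
          have hval : (i' : ℕ) = (c s(f a, f b)).val := by rw [← hT]
          exact Fin.ext (by simp [hval])
      · exact ⟨Fin.last ℓ, S, hScard, fun x hx y hy hxy => by
          simpa using hSmono x hx y hy hxy⟩

lemma not_rprop_zero (t ℓ : ℕ) (ht : 1 ≤ t) : ¬ RProp t ℓ 0 := by
  intro h
  obtain ⟨i, S, hcard, -⟩ := h (Sym2.lift ⟨fun x _ => x.elim0, fun a _ => a.elim0⟩)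
  have hS : S.Nonempty := Finset.card_pos.mp (by omega)
  obtain ⟨x, -⟩ := hS
  exact x.elim0

lemma ramsey_mem (t ℓ : ℕ) (hℓ : 1 ≤ ℓ) : RProp t ℓ (ramsey t ℓ) := by
  have hne : {n | RProp t ℓ n}.Nonempty := rprop_exists t ℓ hℓ
  rw [ramsey_def]
  exact Nat.sInf_mem hne

lemma ramsey_pos (t ℓ : ℕ) (ht : 1 ≤ t) (hℓ : 1 ≤ ℓ) : 1 ≤ ramsey t ℓ := by
  by_contra h
  push_neg at h
  interval_cases h' : ramsey t ℓ
  · exact not_rprop_zero t ℓ ht (by rw [← h']; exact ramsey_mem t ℓ hℓ)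

lemma not_rprop_pred (t ℓ : ℕ) (ht : 1 ≤ t) (hℓ : 1 ≤ ℓ) :
    ¬ RProp t ℓ (ramsey t ℓ - 1) := by
  have h1 := ramsey_pos t ℓ ht hℓ
  have hlt : ramsey t ℓ - 1 < sInf {n | RProp t ℓ n} := by
    rw [← ramsey_def]; omega
  exact Nat.notMem_of_lt_sInf hlt

/-- The product coloring. -/
noncomputable def F (ℓ₁ ℓ₂ a b : ℕ) (c₁ : Sym2 (Fin a) → Fin ℓ₁) (c₂ : Sym2 (Fin b) → Fin ℓ₂)
    (x y : Fin (a * b)) : Fin (ℓ₁ + ℓ₂) :=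
  if (finProdFinEquiv.symm x).1 = (finProdFinEquiv.symm y).1 then
    Fin.natAdd ℓ₁ (c₂ s((finProdFinEquiv.symm x).2, (finProdFinEquiv.symm y).2))
  else
    Fin.castAdd ℓ₂ (c₁ s((finProdFinEquiv.symm x).1, (finProdFinEquiv.symm y).1))

lemma F_comm (ℓ₁ ℓ₂ a b : ℕ) (c₁ : Sym2 (Fin a) → Fin ℓ₁) (c₂ : Sym2 (Fin b) → Fin ℓ₂)
    (x y : Fin (a * b)) : F ℓ₁ ℓ₂ a b c₁ c₂ x y = F ℓ₁ ℓ₂ a b c₁ c₂ y x := by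
  unfold F
  by_cases h : (finProdFinEquiv.symm x).1 = (finProdFinEquiv.symm y).1
  · rw [if_pos h, if_pos h.symm, Sym2.eq_swap]
  · rw [if_neg h, if_neg (fun h' => h h'.symm), Sym2.eq_swap]

lemma product_not {t ℓ₁ ℓ₂ a b : ℕ}
    (h₁ : ¬ RProp t ℓ₁ a) (h₂ : ¬ RProp t ℓ₂ b) : ¬ RProp t (ℓ₁ + ℓ₂) (a * b) := by
  classical
  unfold RProp at h₁ h₂ ⊢
  push_neg at h₁ h₂ ⊢
  obtain ⟨c₁, hc₁⟩ := h₁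
  obtain ⟨c₂, hc₂⟩ := h₂
  have hginj : Function.Injective (fun x : Fin (a * b) => finProdFinEquiv.symm x) :=
    finProdFinEquiv.symm.injective
  refine ⟨Sym2.lift ⟨F ℓ₁ ℓ₂ a b c₁ c₂, F_comm ℓ₁ ℓ₂ a b c₁ c₂⟩, ?_⟩
  intro i S hScard
  by_contra hcon
  push_neg at hcon
  have hmono : ∀ x ∈ S, ∀ y ∈ S, x ≠ y → F ℓ₁ ℓ₂ a b c₁ c₂ x y = i := by
    intro x hx y hy hxy
    have := hcon x hx y hy hxy
    simpa using this
  by_cases hi : (i : ℕ) < ℓ₁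
  · have key : ∀ x ∈ S, ∀ y ∈ S, x ≠ y →
        (finProdFinEquiv.symm x).1 ≠ (finProdFinEquiv.symm y).1 ∧ c₁ s((finProdFinEquiv.symm x).1, (finProdFinEquiv.symm y).1) = ⟨(i : ℕ), hi⟩ := by
      intro x hx y hy hxy
      have hFi := hmono x hx y hy hxy
      unfold F at hFi
      by_cases h : (finProdFinEquiv.symm x).1 = (finProdFinEquiv.symm y).1
      · exfalso
        rw [if_pos h] at hFi
        have : ℓ₁ + ((c₂ s((finProdFinEquiv.symm x).2, (finProdFinEquiv.symm y).2)) : ℕ)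
            = (i : ℕ) := by rw [← hFi]; rfl
        omega
      · rw [if_neg h] at hFi
        refine ⟨h, Fin.ext ?_⟩
        have : ((c₁ s((finProdFinEquiv.symm x).1, (finProdFinEquiv.symm y).1)) : ℕ)
            = (i : ℕ) := by rw [← hFi]; rfl
        simpa using this
    have hinj : Set.InjOn (fun x : Fin (a * b) => (finProdFinEquiv.symm x).1) ↑S := by
      intro x hx y hy hxy
      by_contra hne
      exact (key x hx y hy hne).1 hxy
    obtain ⟨x', hx', y', hy', hne', hbad⟩ :=
      hc₁ ⟨(i : ℕ), hi⟩ (S.image (fun x => (finProdFinEquiv.symm x).1))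
        (by rw [Finset.card_image_of_injOn hinj, hScard])
    obtain ⟨x, hx, rfl⟩ := Finset.mem_image.mp hx'
    obtain ⟨y, hy, rfl⟩ := Finset.mem_image.mp hy'
    have hxy : x ≠ y := fun h => hne' (by rw [h])
    exact hbad (key x hx y hy hxy).2
  · have hi2 : (i : ℕ) - ℓ₁ < ℓ₂ := by have := i.isLt; omega
    have key : ∀ x ∈ S, ∀ y ∈ S, x ≠ y →
        (finProdFinEquiv.symm x).1 = (finProdFinEquiv.symm y).1 ∧ c₂ s((finProdFinEquiv.symm x).2, (finProdFinEquiv.symm y).2) = ⟨(i : ℕ) - ℓ₁, hi2⟩ := by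
      intro x hx y hy hxy
      have hFi := hmono x hx y hy hxy
      unfold F at hFi
      by_cases h : (finProdFinEquiv.symm x).1 = (finProdFinEquiv.symm y).1
      · rw [if_pos h] at hFi
        refine ⟨h, Fin.ext ?_⟩
        have : ℓ₁ + ((c₂ s((finProdFinEquiv.symm x).2, (finProdFinEquiv.symm y).2)) : ℕ)
            = (i : ℕ) := by rw [← hFi]; rfl
        simp only [Fin.val_mk]
        omega
      · exfalso
        rw [if_neg h] at hFi
        have h1 : ((c₁ s((finProdFinEquiv.symm x).1, (finProdFinEquiv.symm y).1)) : ℕ)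
            = (i : ℕ) := by rw [← hFi]; rfl
        have h2 := (c₁ s((finProdFinEquiv.symm x).1, (finProdFinEquiv.symm y).1)).isLt
        omega
    have hinj : Set.InjOn (fun x : Fin (a * b) => (finProdFinEquiv.symm x).2) ↑S := by
      intro x hx y hy hxy
      by_contra hne
      have h1 := (key x hx y hy hne).1
      exact hne (hginj (Prod.ext h1 hxy))
    obtain ⟨x', hx', y', hy', hne', hbad⟩ :=
      hc₂ ⟨(i : ℕ) - ℓ₁, hi2⟩ (S.image (fun x => (finProdFinEquiv.symm x).2))
        (by rw [Finset.card_image_of_injOn hinj, hScard])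
    obtain ⟨x, hx, rfl⟩ := Finset.mem_image.mp hx'
    obtain ⟨y, hy, rfl⟩ := Finset.mem_image.mp hy'
    have hxy : x ≠ y := fun h => hne' (by rw [h])
    exact hbad (key x hx y hy hxy).2

lemma part1 (t ℓ₁ ℓ₂ : ℕ) (ht : 2 ≤ t) (h1 : 1 ≤ ℓ₁) (h2 : 1 ≤ ℓ₂) :
    ramsey t (ℓ₁ + ℓ₂) ≥ (ramsey t ℓ₁ - 1) * (ramsey t ℓ₂ - 1) + 1 := by
  have hnot := product_not (not_rprop_pred t ℓ₁ (by omega) h1)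
    (not_rprop_pred t ℓ₂ (by omega) h2)
  have hmem : RProp t (ℓ₁ + ℓ₂) (ramsey t (ℓ₁ + ℓ₂)) := ramsey_mem t _ (by omega)
  by_contra hlt
  push_neg at hlt
  exact hnot (hmem.mono_n (by omega))

lemma ramsey_mono_l (t : ℕ) (ht : 2 ≤ t) {ℓ ℓ' : ℕ} (h : ℓ ≤ ℓ') (hℓ : 1 ≤ ℓ) :
    ramsey t ℓ ≤ ramsey t ℓ' := by
  have hsub : ∀ n, RProp t ℓ' n → RProp t ℓ n := by
    intro n hn c
    obtain ⟨i', S, hcard, hmono⟩ := hn (fun e => Fin.castLE h (c e))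
    obtain ⟨x₀, hx₀, y₀, hy₀, hne₀⟩ := Finset.one_lt_card.mp
      (show 1 < S.card by omega)
    refine ⟨c s(x₀, y₀), S, hcard, ?_⟩
    intro x hx y hy hxy
    have e1 := hmono x hx y hy hxy
    have e2 := hmono x₀ hx₀ y₀ hy₀ hne₀
    exact Fin.castLE_injective h (e1.trans e2.symm)
  have hmem : RProp t ℓ' (ramsey t ℓ') := ramsey_mem t ℓ' (by omega)
  rw [ramsey_def]
  exact Nat.sInf_le (hsub _ hmem)

lemma part2 (t : ℕ) (ht : 2 ≤ t) : ∀ ℓ : ℕ, 2 ≤ ℓ →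
    ramsey t ℓ ≥ (ramsey t 2 - 1) ^ (ℓ / 2) + 1 := by
  intro ℓ
  induction ℓ using Nat.strong_induction_on with
  | _ ℓ ih =>
    intro hℓ
    rcases lt_or_ge ℓ 4 with h4 | h4
    · have hdiv : ℓ / 2 = 1 := by omega
      rw [hdiv, pow_one]
      have h2 : ramsey t 2 ≤ ramsey t ℓ := ramsey_mono_l t ht (by omega) (by omega)
      have hpos : 1 ≤ ramsey t 2 := ramsey_pos t 2 (by omega) (by omega)
      omega
    · have hsplit : (ℓ - 2) + 2 = ℓ := by omega
      have hp1 := part1 t (ℓ - 2) 2 ht (by omega) (by omega)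
      rw [hsplit] at hp1
      have hih := ih (ℓ - 2) (by omega) (by omega)
      have hstep : (ramsey t 2 - 1) ^ ((ℓ - 2) / 2) ≤ ramsey t (ℓ - 2) - 1 := by omega
      have hmul : (ramsey t 2 - 1) ^ ((ℓ - 2) / 2) * (ramsey t 2 - 1) ≤
          (ramsey t (ℓ - 2) - 1) * (ramsey t 2 - 1) :=
        Nat.mul_le_mul_right _ hstep
      have hpow : (ramsey t 2 - 1) ^ ((ℓ - 2) / 2) * (ramsey t 2 - 1) =
          (ramsey t 2 - 1) ^ (ℓ / 2) := by
        rw [← pow_succ]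
        congr 1
        omega
      omega

end AbbottAux

/-- Abbott's product bound: `r(t; ℓ₁+ℓ₂) ≥ (r(t;ℓ₁)-1)(r(t;ℓ₂)-1)+1`; consequently
`r(t; ℓ) ≥ (r(t;2)-1)^{⌊ℓ/2⌋} + 1`. -/
theorem abbott_product_bound :
    (∀ t ℓ₁ ℓ₂ : ℕ, 2 ≤ t → 1 ≤ ℓ₁ → 1 ≤ ℓ₂ →
      ramsey t (ℓ₁ + ℓ₂) ≥ (ramsey t ℓ₁ - 1) * (ramsey t ℓ₂ - 1) + 1) ∧
    (∀ t ℓ : ℕ, 2 ≤ t → 2 ≤ ℓ →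
      ramsey t ℓ ≥ (ramsey t 2 - 1) ^ (ℓ / 2) + 1) := by
  exact ⟨fun t ℓ₁ ℓ₂ ht h1 h2 => AbbottAux.part1 t ℓ₁ ℓ₂ ht h1 h2,
    fun t ℓ ht hℓ => AbbottAux.part2 t ht ℓ hℓ⟩
end
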